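/- arXiv:2002.09484 — 2 statements merged into one kernel-verified Lean document; each statement's English description precedes it below -/
import Mathlib

section
/- If Q follows a chi-squared distribution with p degrees of freedom and f : ℝ → ℝ is absolutely continuous with E|f(Q)|, E|Q·f(Q)|, E|Q·f'(Q)| finite, then E[(Q - p)·f(Q)] = 2·E[Q·f'(Q)]. -/
open MeasureTheory ProbabilityTheory Real Set Filter

/-! The gamma density `ρ` with shape `a` and rate `r` satisfies the Pearson equation
`(x ρ)' = (a - r x) ρ` on `(0, ∞)`. Hence the derivative of `x ρ(x) f(x)` is
`(a - r x) ρ f + x ρ f'`; since `x ρ(x) f(x)` vanishes at `0` and, being integrable with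
integrable derivative, at `∞`, that derivative integrates to zero over `(0, ∞)`. This is Stein's
identity `E[(r X - a) f(X)] = E[X f'(X)]` for `X ∼ Γ(a, r)`, and `χ²_p = Γ(p/2, 1/2)`. -/

theorem integral_Ioi_of_hasDerivAt_of_integrableOn {E : Type*} [NormedAddCommGroup E]
    [NormedSpace ℝ E] [CompleteSpace E] {g g' : ℝ → E} {a : ℝ}
    (hcont : ContinuousWithinAt g (Ici a) a) (hderiv : ∀ x ∈ Ioi a, HasDerivAt g (g' x) x)
    (hg' : IntegrableOn g' (Ioi a)) (hg : IntegrableOn g (Ioi a)) :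
    ∫ x in Ioi a, g' x = -g a := by
  rw [integral_Ioi_of_hasDerivAt_of_tendsto hcont hderiv hg'
    (tendsto_zero_of_hasDerivAt_of_integrableOn_Ioi hderiv hg' hg), zero_sub]

namespace ProbabilityTheory

variable {a r : ℝ}

lemma toReal_gammaPDF (ha : 0 < a) (hr : 0 < r) (x : ℝ) :
    (gammaPDF a r x).toReal = gammaPDFReal a r x :=
  ENNReal.toReal_ofReal (gammaPDFReal_nonneg ha hr x)

lemma measurable_gammaPDF (a r : ℝ) : Measurable (gammaPDF a r) :=
  (measurable_gammaPDFReal a r).ennreal_ofReal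

lemma integrable_gammaMeasure_iff (ha : 0 < a) (hr : 0 < r) {g : ℝ → ℝ} :
    Integrable g (gammaMeasure a r) ↔ Integrable (fun x ↦ gammaPDFReal a r x * g x) := by
  rw [gammaMeasure, integrable_withDensity_iff_integrable_smul'
    (measurable_gammaPDF a r) (ae_of_all _ fun _ ↦ ENNReal.ofReal_lt_top)]
  simp_rw [toReal_gammaPDF ha hr, smul_eq_mul]

lemma integral_gammaMeasure (ha : 0 < a) (hr : 0 < r) (g : ℝ → ℝ) :
    ∫ x, g x ∂gammaMeasure a r = ∫ x, gammaPDFReal a r x * g x := by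
  rw [gammaMeasure, integral_withDensity_eq_integral_toReal_smul
    (measurable_gammaPDF a r) (ae_of_all _ fun _ ↦ ENNReal.ofReal_lt_top)]
  simp_rw [toReal_gammaPDF ha hr, smul_eq_mul]

lemma integral_gammaPDFReal_mul_eq_integral_Ioi (g : ℝ → ℝ) :
    ∫ x, gammaPDFReal a r x * g x = ∫ x in Ioi 0, gammaPDFReal a r x * g x := by
  rw [← integral_Ici_eq_integral_Ioi, setIntegral_eq_integral_of_forall_compl_eq_zero]
  intro x (hx : ¬0 ≤ x)
  rw [gammaPDFReal, if_neg hx, zero_mul]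

lemma mul_gammaPDFReal_of_pos {x : ℝ} (hx : 0 < x) :
    x * gammaPDFReal a r x = r ^ a / Gamma a * (x ^ a * exp (-(r * x))) := by
  rw [gammaPDFReal, if_pos hx.le, rpow_sub_one hx.ne']
  field_simp

lemma hasDerivAt_mul_gammaPDFReal {x : ℝ} (hx : 0 < x) :
    HasDerivAt (fun y ↦ y * gammaPDFReal a r y) ((a - r * x) * gammaPDFReal a r x) x := by
  have hpow : HasDerivAt (fun y ↦ y ^ a) (a * x ^ (a - 1)) x :=
    hasDerivAt_rpow_const (Or.inl hx.ne')
  have hexp : HasDerivAt (fun y ↦ exp (-(r * y))) (exp (-(r * x)) * -r) x := by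
    simpa using ((hasDerivAt_id x).const_mul r).neg.exp
  refine ((hpow.mul hexp).const_mul (r ^ a / Gamma a)).congr_of_eventuallyEq
    ((eventually_gt_nhds hx).mono fun y hy ↦ mul_gammaPDFReal_of_pos hy) |>.congr_deriv ?_
  rw [gammaPDFReal, if_pos hx.le, rpow_sub_one hx.ne']
  field_simp
  ring

lemma continuousWithinAt_mul_gammaPDFReal_zero (ha : 0 < a) :
    ContinuousWithinAt (fun y ↦ y * gammaPDFReal a r y) (Ici 0) 0 := by
  rw [← continuousWithinAt_Ioi_iff_Ici]
  have hcont : ContinuousAt (fun y ↦ r ^ a / Gamma a * (y ^ a * exp (-(r * y)))) 0 :=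
    ((continuousAt_rpow_const 0 a (Or.inr ha.le)).mul (by fun_prop)).const_mul _
  exact hcont.continuousWithinAt.congr (fun y hy ↦ mul_gammaPDFReal_of_pos hy)
    (by simp [zero_rpow ha.ne'])

theorem integral_gammaMeasure_stein (ha : 0 < a) (hr : 0 < r) {f f' : ℝ → ℝ}
    (hf : ∀ x ∈ Ioi 0, HasDerivAt f (f' x) x) (hf0 : ContinuousWithinAt f (Ici 0) 0)
    (h1 : Integrable f (gammaMeasure a r))
    (h2 : Integrable (fun x ↦ x * f x) (gammaMeasure a r))
    (h3 : Integrable (fun x ↦ x * f' x) (gammaMeasure a r)) :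
    ∫ x, (r * x - a) * f x ∂gammaMeasure a r = ∫ x, x * f' x ∂gammaMeasure a r := by
  rw [integrable_gammaMeasure_iff ha hr] at h1 h2 h3
  rw [integral_gammaMeasure ha hr, integral_gammaMeasure ha hr,
    integral_gammaPDFReal_mul_eq_integral_Ioi, integral_gammaPDFReal_mul_eq_integral_Ioi]
  have hlhs : Integrable fun x ↦ gammaPDFReal a r x * ((r * x - a) * f x) :=
    ((h2.const_mul r).sub (h1.const_mul a)).congr
      (ae_of_all _ fun x ↦ by simp only [Pi.sub_apply]; ring)
  have hderiv : ∀ x ∈ Ioi 0, HasDerivAt (fun y ↦ y * gammaPDFReal a r y * f y)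
      (gammaPDFReal a r x * (x * f' x) - gammaPDFReal a r x * ((r * x - a) * f x)) x :=
    fun x hx ↦ ((hasDerivAt_mul_gammaPDFReal hx).mul (hf x hx)).congr_deriv (by ring)
  have hftc := integral_Ioi_of_hasDerivAt_of_integrableOn
    (g := fun y ↦ y * gammaPDFReal a r y * f y)
    ((continuousWithinAt_mul_gammaPDFReal_zero ha).mul hf0) hderiv (h3.sub hlhs).integrableOn
    (h2.integrableOn.congr_fun (fun x _ ↦ by ring) measurableSet_Ioi)
  rw [integral_sub h3.integrableOn hlhs.integrableOn, zero_mul, zero_mul, neg_zero] at hftc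
  exact (sub_eq_zero.mp hftc).symm

end ProbabilityTheory

theorem chisq_ibp
    {Ω : Type*} [MeasureSpace Ω] (P : Measure Ω) [IsProbabilityMeasure P]
    (p : ℕ) (hp : 0 < p)
    (Q : Ω → ℝ) (hQ : Measurable Q)
    (hQd : P.map Q = gammaMeasure ((p : ℝ) / 2) (1 / 2))
    (f f' : ℝ → ℝ) (hf : ∀ x, HasDerivAt f (f' x) x)
    (h1 : Integrable (fun ω => f (Q ω)) P)
    (h2 : Integrable (fun ω => Q ω * f (Q ω)) P)
    (h3 : Integrable (fun ω => Q ω * f' (Q ω)) P) :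
    ∫ ω, (Q ω - p) * f (Q ω) ∂P = 2 * ∫ ω, Q ω * f' (Q ω) ∂P := by
  have hf_meas : Measurable f :=
    (continuous_iff_continuousAt.mpr fun x ↦ (hf x).continuousAt).measurable
  have hf'_meas : Measurable f' := by
    rw [show f' = deriv f from funext fun x ↦ (hf x).deriv.symm]
    exact measurable_deriv f
  have integral_comp {g : ℝ → ℝ} (hg : Measurable g) :
      ∫ ω, g (Q ω) ∂P = ∫ x, g x ∂gammaMeasure (p / 2) (1 / 2) := by
    rw [← hQd, integral_map hQ.aemeasurable hg.aestronglyMeasurable]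
  have integrable_of_comp {g : ℝ → ℝ} (hg : Measurable g)
      (h : Integrable (fun ω ↦ g (Q ω)) P) :
      Integrable g (gammaMeasure (p / 2) (1 / 2)) := by
    rwa [← hQd, integrable_map_measure hg.aestronglyMeasurable hQ.aemeasurable]
  have stein := integral_gammaMeasure_stein (by positivity) one_half_pos
    (fun x _ ↦ hf x) (hf 0).continuousAt.continuousWithinAt (integrable_of_comp hf_meas h1)
    (integrable_of_comp (by fun_prop) h2) (integrable_of_comp (by fun_prop) h3)
  rw [integral_comp (g := fun x ↦ (x - p) * f x) (by fun_prop),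
    integral_comp (g := fun x ↦ x * f' x) (by fun_prop), ← stein, ← integral_const_mul]
  congr 1 with x
  ring
end

section
/- With the notation of the preceding theorem (U = Σ λ_i Q_i a weighted sum of independent chi-squared variables, μ = E[U], Λ_k, μ_k as defined), for any r-times differentiable f with the relevant expectations finite: Σ_{k=0}^r (−2)^k · E[(μ_k + Λ_k·U − Λ_k·μ)·f^{(k)}(U)] = 0. -/
open MeasureTheory ProbabilityTheory Finset Real
open scoped ENNReal NNReal Topology



lemma my_gammaPDFReal_mul_self {a b : ℝ} (ha : 0 < a) (hb : 0 < b) (x : ℝ) :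
    x * gammaPDFReal a b x = (a / b) * gammaPDFReal (a + 1) b x := by
  unfold gammaPDFReal
  rcases lt_trichotomy x 0 with hx | hx | hx
  · rw [if_neg (not_le.mpr hx), if_neg (not_le.mpr hx)]; ring
  · subst hx
    rw [if_pos le_rfl, if_pos le_rfl, Real.zero_rpow (by linarith : a + 1 - 1 ≠ 0)]
    rcases lt_trichotomy a 1 with h1 | h1 | h1
    · ring
    · subst h1; ring
    · rw [Real.zero_rpow (by linarith : a - 1 ≠ 0)]; ring
  · rw [if_pos hx.le, if_pos hx.le]
    have h1 : x ^ (a + 1 - 1) = x ^ (a - 1) * x := by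
      rw [show a + 1 - 1 = (a - 1) + 1 by ring, Real.rpow_add_one hx.ne']
    have h2 : Real.Gamma (a + 1) = a * Real.Gamma a := Real.Gamma_add_one ha.ne'
    have h3 : b ^ (a + 1 : ℝ) = b ^ (a : ℝ) * b := Real.rpow_add_one hb.ne' a
    have hΓ : Real.Gamma a ≠ 0 := (Real.Gamma_pos_of_pos ha).ne'
    rw [h1, h2, h3]
    field_simp

lemma my_integrable_gammaPDFReal {a b : ℝ} (ha : 0 < a) (hb : 0 < b) :
    Integrable (gammaPDFReal a b) := by
  refine ⟨(measurable_gammaPDFReal a b).aestronglyMeasurable, ?_⟩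
  unfold HasFiniteIntegral
  have h : ∀ x : ℝ, ‖gammaPDFReal a b x‖ₑ = gammaPDF a b x := by
    intro x
    rw [gammaPDF, ← Real.enorm_eq_ofReal (gammaPDFReal_nonneg ha hb x)]
  simp_rw [h, lintegral_gammaPDF_eq_one ha hb]
  exact ENNReal.one_lt_top

lemma my_integrable_id_gammaMeasure {a b : ℝ} (ha : 0 < a) (hb : 0 < b) :
    Integrable id (gammaMeasure a b) := by
  have hgm : gammaMeasure a b
      = volume.withDensity (fun x => ENNReal.ofReal (gammaPDFReal a b x)) := rfl
  rw [hgm, integrable_withDensity_iff ((measurable_gammaPDFReal a b).ennreal_ofReal)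
    (ae_of_all _ fun x => ENNReal.ofReal_lt_top)]
  have h : ∀ x : ℝ, x * (ENNReal.ofReal (gammaPDFReal a b x)).toReal
      = (a / b) * gammaPDFReal (a + 1) b x := by
    intro x
    rw [ENNReal.toReal_ofReal (gammaPDFReal_nonneg ha hb x),
      my_gammaPDFReal_mul_self ha hb]
  exact (Integrable.const_mul (my_integrable_gammaPDFReal (by linarith) hb) (a / b)).congr
    (ae_of_all _ fun x => (h x).symm)

lemma my_integral_gammaMeasure {a b : ℝ} (ha : 0 < a) (hb : 0 < b) (g : ℝ → ℝ) :
    ∫ x, g x ∂(gammaMeasure a b) = ∫ x, gammaPDFReal a b x * g x := by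
  have hgm : gammaMeasure a b
      = volume.withDensity (fun x => ((Real.toNNReal (gammaPDFReal a b x) : ℝ≥0) : ℝ≥0∞)) := rfl
  rw [hgm, integral_withDensity_eq_integral_smul
    (measurable_gammaPDFReal a b).real_toNNReal g]
  congr 1
  ext x
  simp [NNReal.smul_def, Real.coe_toNNReal _ (gammaPDFReal_nonneg ha hb x)]

lemma my_hasCompactSupport_comb {g : ℝ → ℝ} (hg : ContDiff ℝ 1 g) (hsupp : HasCompactSupport g)
    (a b : ℝ) :
    HasCompactSupport (fun x => (a - b * x) * g x + x * deriv g x) :=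
  ((hsupp.mul_left).add ((hsupp.deriv).mul_left))

lemma my_stein_gamma {a b : ℝ} (ha : 0 < a) (hb : 0 < b) (g : ℝ → ℝ)
    (hg : ContDiff ℝ 1 g) (hsupp : HasCompactSupport g) :
    ∫ x, ((a - b * x) * g x + x * deriv g x) ∂(gammaMeasure a b) = 0 := by
  classical
  set G : ℝ → ℝ := fun x => (a - b * x) * g x + x * deriv g x with hG
  have hgc : Continuous g := hg.continuous
  have hg'c : Continuous (deriv g) := hg.continuous_deriv le_rfl
  have hGc : Continuous G := by
    apply Continuous.add
    · exact (continuous_const.sub (continuous_const.mul continuous_id)).mul hgc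
    · exact continuous_id.mul hg'c
  have hGsupp : HasCompactSupport G := my_hasCompactSupport_comb hg hsupp a b
  obtain ⟨M, hM⟩ := hGsupp.exists_bound_of_continuous hGc
  -- the antiderivative
  set F : ℝ → ℝ := fun x => x ^ a * Real.exp (-(b * x)) * g x with hF
  set F' : ℝ → ℝ := fun x => x ^ (a - 1) * Real.exp (-(b * x)) * G x with hF'
  have hderiv : ∀ x ∈ Set.Ioi (0 : ℝ), HasDerivAt F (F' x) x := by
    intro x hx
    have hx0 : (0 : ℝ) < x := hx
    have h1 : HasDerivAt (fun y : ℝ => y ^ a) (a * x ^ (a - 1)) x :=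
      Real.hasDerivAt_rpow_const (Or.inl hx0.ne')
    have h2 : HasDerivAt (fun y : ℝ => Real.exp (-(b * y))) (-b * Real.exp (-(b * x))) x := by
      have := (Real.hasDerivAt_exp (-(b * x))).comp x
        (((hasDerivAt_id x).const_mul b).neg)
      simpa [mul_comm, Function.comp_def, Pi.neg_def] using this
    have h3 : HasDerivAt g (deriv g x) x :=
      (hg.differentiable one_ne_zero x).hasDerivAt
    have H : HasDerivAt F _ x := ((h1.mul h2).mul h3)
    convert H using 1
    have hxa : x ^ a = x ^ (a - 1) * x := by
      rw [show a = (a - 1) + 1 by ring, Real.rpow_add_one hx0.ne']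
      ring_nf
    simp only [hF', hG, hxa, Pi.mul_apply]
    ring
  have hcont0 : ContinuousWithinAt F (Set.Ici 0) 0 := by
    apply ContinuousAt.continuousWithinAt
    have h1 : ContinuousAt (fun y : ℝ => y ^ a) 0 :=
      Real.continuousAt_rpow_const 0 a (Or.inr ha.le)
    exact (h1.mul ((Real.continuous_exp.comp
      ((continuous_const.mul continuous_id).neg)).continuousAt)).mul hgc.continuousAt
  have htop : Filter.Tendsto F Filter.atTop (𝓝 0) := by
    obtain ⟨R, hR⟩ := hsupp.isCompact.isBounded.subset_closedBall 0
    apply Filter.Tendsto.congr' _ tendsto_const_nhds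
    filter_upwards [Filter.eventually_gt_atTop R] with x hx
    have : g x = 0 := by
      by_contra h
      have : x ∈ tsupport g := subset_tsupport g h
      have := hR this
      simp [Metric.mem_closedBall, Real.dist_eq, abs_le] at this
      linarith [this.2]
    simp [hF, this]
  -- key constant
  have hΓpos : 0 < Real.Gamma a := Real.Gamma_pos_of_pos ha
  have hbpos : (0:ℝ) < b ^ (a:ℝ) := Real.rpow_pos_of_pos hb a
  have hpdf_eq : ∀ x ∈ Set.Ioi (0:ℝ),
      F' x = (Real.Gamma a / b ^ (a:ℝ)) * (gammaPDFReal a b x * G x) := by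
    intro x hx
    have hx0 : (0:ℝ) < x := hx
    unfold gammaPDFReal
    rw [if_pos hx0.le]
    simp only [hF']
    field_simp
  have hint_pdfG : Integrable (fun x => gammaPDFReal a b x * G x) := by
    have := (my_integrable_gammaPDFReal ha hb).bdd_mul hGc.aestronglyMeasurable (ae_of_all _ hM)
    exact this.congr (ae_of_all _ fun x => mul_comm _ _)
  have hF'int : IntegrableOn F' (Set.Ioi 0) := by
    apply (((hint_pdfG.const_mul (Real.Gamma a / b ^ (a:ℝ))).integrableOn)).congr_fun ?_
      measurableSet_Ioi
    intro x hx
    exact (hpdf_eq x hx).symm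
  have hFTC : ∫ x in Set.Ioi (0:ℝ), F' x = 0 - F 0 :=
    integral_Ioi_of_hasDerivAt_of_tendsto hcont0 hderiv hF'int htop
  have hF0 : F 0 = 0 := by
    simp [hF, Real.zero_rpow ha.ne']
  rw [hF0, sub_zero] at hFTC
  -- now express the goal
  rw [my_integral_gammaMeasure ha hb]
  have hsplit : ∫ x in Set.Ioi (0:ℝ), gammaPDFReal a b x * G x
      = ∫ x, gammaPDFReal a b x * G x := by
    apply setIntegral_eq_integral_of_ae_compl_eq_zero
    filter_upwards [compl_mem_ae_iff.mpr (measure_singleton (0:ℝ))] with x hx hx'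
    have hxne : x ≠ 0 := by simpa using hx
    have : x < 0 := lt_of_le_of_ne (by simpa using hx') hxne
    unfold gammaPDFReal
    rw [if_neg (not_le.mpr this)]
    ring
  have hconst : ∫ x in Set.Ioi (0:ℝ), F' x
      = (Real.Gamma a / b ^ (a:ℝ)) * ∫ x in Set.Ioi (0:ℝ), gammaPDFReal a b x * G x := by
    rw [← MeasureTheory.integral_const_mul]
    exact setIntegral_congr_fun measurableSet_Ioi hpdf_eq
  rw [hconst] at hFTC
  have hc : (Real.Gamma a / b ^ (a:ℝ)) ≠ 0 := by positivity
  have := (mul_eq_zero.mp hFTC).resolve_left hc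
  rw [← hsplit]
  exact this
lemma my_stein_step {Ω : Type*} [MeasureSpace Ω] (P : Measure Ω) [IsProbabilityMeasure P]
    {r : ℕ} (m : Fin r → ℕ) (hm : ∀ i, 0 < m i)
    (Q : Fin r → Ω → ℝ) (hQ : ∀ i, Measurable (Q i))
    (hindep : iIndepFun Q P)
    (hQd : ∀ i, P.map (Q i) = gammaMeasure ((m i : ℝ) / 2) (1 / 2))
    (lam : Fin r → ℝ) (hnz : ∀ i, lam i ≠ 0) (i : Fin r)
    (g : ℝ → ℝ) (hg : ContDiff ℝ 1 g) (hsupp : HasCompactSupport g) :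
    ∫ ω, (((m i : ℝ) - Q i ω) * g (∑ j, lam j * Q j ω)
      + 2 * lam i * (Q i ω * deriv g (∑ j, lam j * Q j ω))) ∂P = 0 := by
  classical
  have hgc : Continuous g := hg.continuous
  have hg'c : Continuous (deriv g) := hg.continuous_deriv le_rfl
  set V : Ω → ℝ := fun ω => ∑ j ∈ univ.erase i, lam j * Q j ω with hV
  have hVmeas : Measurable V := by
    apply Finset.measurable_sum
    intro j _
    exact (hQ j).const_mul (lam j)
  have hUsum : ∀ ω, (∑ j, lam j * Q j ω) = lam i * Q i ω + V ω := by
    intro ω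
    rw [hV, ← Finset.add_sum_erase univ _ (Finset.mem_univ i)]
  -- independence of Q i and V
  have hindepX : iIndepFun (fun j => fun ω => lam j * Q j ω) P := by
    have := hindep.comp (fun j => fun x : ℝ => lam j * x)
      (fun j => measurable_const_mul (lam j))
    exact this
  have hI1 : IndepFun (∑ j ∈ univ.erase i, fun ω => lam j * Q j ω) (fun ω => lam i * Q i ω) P :=
    hindepX.indepFun_finset_sum_of_notMem
      (fun j => (hQ j).const_mul (lam j)) (Finset.notMem_erase i univ)
  have hI2 : IndepFun (Q i) V P := by
    have h1 : IndepFun (fun ω => lam i * Q i ω) V P := by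
      apply IndepFun.symm
      have : V = ∑ j ∈ univ.erase i, fun ω => lam j * Q j ω := by
        funext ω; rw [hV, Finset.sum_apply]
      rwa [this]
    have h2 := h1.comp (measurable_const_mul (lam i)⁻¹) measurable_id
    have : ((fun x : ℝ => (lam i)⁻¹ * x) ∘ fun ω => lam i * Q i ω) = Q i := by
      funext ω
      simp [Function.comp, inv_mul_cancel_left₀ (hnz i)]
    rwa [this] at h2
  -- bounds
  obtain ⟨M1, hM1⟩ := hsupp.exists_bound_of_continuous hgc
  obtain ⟨M2, hM2⟩ := (hsupp.deriv).exists_bound_of_continuous hg'c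
  -- the function on the product space
  set Φ : ℝ × ℝ → ℝ := fun p => ((m i : ℝ) - p.1) * g (lam i * p.1 + p.2)
    + 2 * lam i * (p.1 * deriv g (lam i * p.1 + p.2)) with hΦ
  have hΦc : Continuous Φ := by
    have haff : Continuous (fun p : ℝ × ℝ => lam i * p.1 + p.2) :=
      ((continuous_const.mul continuous_fst).add continuous_snd)
    exact ((continuous_const.sub continuous_fst).mul (hgc.comp haff)).add
      (continuous_const.mul (continuous_fst.mul (hg'c.comp haff)))
  haveI : IsProbabilityMeasure (P.map (Q i)) := Measure.isProbabilityMeasure_map (hQ i).aemeasurable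
  haveI : IsProbabilityMeasure (P.map V) := Measure.isProbabilityMeasure_map hVmeas.aemeasurable
  set μ1 := P.map (Q i)
  set μ2 := P.map V
  -- integrability of Φ over the product
  have hid : Integrable (fun x : ℝ => x) μ1 := by
    have : μ1 = gammaMeasure ((m i : ℝ) / 2) (1 / 2) := hQd i
    rw [this]
    exact my_integrable_id_gammaMeasure (by have := hm i; positivity) (by norm_num)
  have habs : Integrable (fun p : ℝ × ℝ => |p.1|) (μ1.prod μ2) := by
    have h1 : Integrable (fun x : ℝ => |x|) μ1 := hid.abs
    have h2 : Integrable (fun x : ℝ => |x|) (Measure.map Prod.fst (μ1.prod μ2)) := by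
      rw [MeasureTheory.Measure.map_fst_prod]
      simpa using h1
    exact h2.comp_measurable measurable_fst
  have hΦint : Integrable Φ (μ1.prod μ2) := by
    apply Integrable.mono' ((habs.const_mul (M1 + 2 * |lam i| * M2)).add (integrable_const
      ((m i : ℝ) * M1)))
    · exact hΦc.aestronglyMeasurable
    · apply ae_of_all
      intro p
      have hb1 : |g (lam i * p.1 + p.2)| ≤ M1 := by simpa using hM1 (lam i * p.1 + p.2)
      have hb2 : |deriv g (lam i * p.1 + p.2)| ≤ M2 := by simpa using hM2 (lam i * p.1 + p.2)
      have h0 : (0:ℝ) ≤ M1 := le_trans (abs_nonneg _) hb1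
      have h0' : (0:ℝ) ≤ M2 := le_trans (abs_nonneg _) hb2
      rw [hΦ]
      simp only [Real.norm_eq_abs]
      calc |((m i : ℝ) - p.1) * g (lam i * p.1 + p.2)
            + 2 * lam i * (p.1 * deriv g (lam i * p.1 + p.2))|
          ≤ |((m i : ℝ) - p.1)| * |g (lam i * p.1 + p.2)|
            + 2 * |lam i| * (|p.1| * |deriv g (lam i * p.1 + p.2)|) := by
            refine (abs_add_le _ _).trans ?_
            simp only [abs_mul]
            rw [show |(2:ℝ)| = 2 by norm_num]
        _ ≤ ((m i : ℝ) + |p.1|) * M1 + 2 * |lam i| * (|p.1| * M2) := by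
            have habs1 : |((m i : ℝ) - p.1)| ≤ (m i : ℝ) + |p.1| := by
              refine (abs_sub _ _).trans ?_
              simp [Nat.abs_cast]
            refine add_le_add (mul_le_mul habs1 hb1 (abs_nonneg _) (by positivity)) ?_
            refine mul_le_mul_of_nonneg_left ?_ (by positivity)
            exact mul_le_mul_of_nonneg_left hb2 (abs_nonneg _)
        _ ≤ (M1 + 2 * |lam i| * M2) * |p.1| + (m i : ℝ) * M1 := by nlinarith [abs_nonneg p.1, abs_nonneg (lam i)]
  -- transfer the integral
  have hpair : P.map (fun ω => (Q i ω, V ω)) = μ1.prod μ2 :=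
    (indepFun_iff_map_prod_eq_prod_map_map (hQ i).aemeasurable hVmeas.aemeasurable).mp hI2
  have hstep1 : ∫ ω, (((m i : ℝ) - Q i ω) * g (∑ j, lam j * Q j ω)
      + 2 * lam i * (Q i ω * deriv g (∑ j, lam j * Q j ω))) ∂P
      = ∫ p, Φ p ∂(μ1.prod μ2) := by
    rw [← hpair, integral_map ((hQ i).prodMk hVmeas).aemeasurable hΦc.aestronglyMeasurable]
    congr 1
    funext ω
    rw [hΦ]
    simp only [hUsum ω]
  rw [hstep1, MeasureTheory.integral_prod_symm _ hΦint]
  -- inner integral vanishes for every v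
  have hinner : ∀ v : ℝ, ∫ q, Φ (q, v) ∂μ1 = 0 := by
    intro v
    have hμ1 : μ1 = gammaMeasure ((m i : ℝ) / 2) (1 / 2) := hQd i
    -- the shifted function
    set gv : ℝ → ℝ := fun q => g (lam i * q + v) with hgv
    have hgvC : ContDiff ℝ 1 gv :=
      hg.comp ((contDiff_const.mul contDiff_id).add contDiff_const)
    have hgvsupp : HasCompactSupport gv := by
      have he : gv = g ∘ ((Homeomorph.addRight v).trans (Homeomorph.refl ℝ)).symm.symm
          ∘ (Homeomorph.mulLeft₀ (lam i) (hnz i)) := by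
        funext q; simp [hgv, Function.comp]
      rw [hgv]
      have : (fun q => g (lam i * q + v))
          = g ∘ ((Homeomorph.mulLeft₀ (lam i) (hnz i)).trans (Homeomorph.addRight v)) := by
        funext q; simp [Function.comp]
      rw [this]
      exact hsupp.comp_homeomorph _
    have hgvderiv : ∀ q : ℝ, deriv gv q = lam i * deriv g (lam i * q + v) := by
      intro q
      have h1 : HasDerivAt (fun q : ℝ => lam i * q + v) (lam i) q := by
        simpa using ((hasDerivAt_id q).const_mul (lam i)).add_const v
      have h2 : HasDerivAt g (deriv g (lam i * q + v)) (lam i * q + v) :=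
        (hg.differentiable one_ne_zero _).hasDerivAt
      have hd : HasDerivAt (fun q : ℝ => g (lam i * q + v))
          (deriv g (lam i * q + v) * lam i) q := h2.comp q h1
      rw [hgv, hd.deriv]
      ring
    have hsg := my_stein_gamma (a := (m i : ℝ) / 2) (b := 1 / 2)
      (by have := hm i; positivity) (by norm_num) gv hgvC hgvsupp
    have : ∀ q : ℝ, Φ (q, v)
        = 2 * (((m i : ℝ) / 2 - 1 / 2 * q) * gv q + q * deriv gv q) := by
      intro q
      rw [hΦ, hgv]
      simp only []
      rw [hgvderiv q]
      ring
    simp_rw [this]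
    rw [hμ1, MeasureTheory.integral_const_mul, hsg, mul_zero]
  simp_rw [hinner]
  simp
lemma my_esymm_rec {r : ℕ} (lam : Fin r → ℝ) (i : Fin r) (k : ℕ) :
    (∑ S ∈ (univ : Finset (Fin r)).powersetCard (k+1), ∏ j ∈ S, lam j)
      = (∑ S ∈ ((univ : Finset (Fin r)).erase i).powersetCard (k+1), ∏ j ∈ S, lam j)
        + lam i * ∑ S ∈ ((univ : Finset (Fin r)).erase i).powersetCard k, ∏ j ∈ S, lam j := by
  classical
  have h : (univ : Finset (Fin r)) = insert i (univ.erase i) :=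
    (Finset.insert_erase (mem_univ i)).symm
  rw [show ((univ : Finset (Fin r)).powersetCard (k+1))
      = (insert i (univ.erase i)).powersetCard (k+1) by rw [← h]]
  rw [Finset.powersetCard_succ_insert (Finset.notMem_erase i univ)]
  rw [Finset.sum_union]
  · congr 1
    rw [Finset.sum_image ?hinj]
    case hinj =>
      intro S hS T hT hST
      have hiS : i ∉ S := fun hi => (Finset.notMem_erase i univ)
        ((Finset.mem_powersetCard.mp hS).1 hi)
      have hiT : i ∉ T := fun hi => (Finset.notMem_erase i univ)
        ((Finset.mem_powersetCard.mp hT).1 hi)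
      have := congrArg (fun s => Finset.erase s i) hST
      simpa [Finset.erase_insert hiS, Finset.erase_insert hiT] using this
    rw [Finset.mul_sum]
    apply Finset.sum_congr rfl
    intro S hS
    have hiS : i ∉ S := fun hi => (Finset.notMem_erase i univ)
      ((Finset.mem_powersetCard.mp hS).1 hi)
    rw [Finset.prod_insert hiS]
  · rw [Finset.disjoint_left]
    intro S hS hS'
    obtain ⟨T, hT, rfl⟩ := Finset.mem_image.mp hS'
    have hiT : i ∉ T := fun hi => (Finset.notMem_erase i univ)
      ((Finset.mem_powersetCard.mp hT).1 hi)
    have : i ∈ insert i T := Finset.mem_insert_self i T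
    exact (Finset.notMem_erase i univ) ((Finset.mem_powersetCard.mp hS).1 this)

lemma my_esymm_top {r : ℕ} (lam : Fin r → ℝ) (i : Fin r) :
    (∑ S ∈ ((univ : Finset (Fin r)).erase i).powersetCard r, ∏ j ∈ S, lam j) = 0 := by
  classical
  have hr : 0 < r := i.pos
  have hcard : ((univ : Finset (Fin r)).erase i).card < r := by
    rw [Finset.card_erase_of_mem (mem_univ i), Finset.card_univ, Fintype.card_fin]
    omega
  rw [Finset.powersetCard_eq_empty.mpr hcard, Finset.sum_empty]

lemma my_contDiff_one_iteratedDeriv {g : ℝ → ℝ} {r k : ℕ} (hg : ContDiff ℝ r g)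
    (h : k + 1 ≤ r) : ContDiff ℝ 1 (iteratedDeriv k g) := by
  rw [iteratedDeriv_eq_equiv_comp]
  apply ContDiff.comp
  · exact (LinearIsometryEquiv.contDiff _)
  · refine hg.iteratedFDeriv_right ?_
    calc (1 : WithTop ℕ∞) + k = ((1 + k : ℕ) : WithTop ℕ∞) := by push_cast; ring
    _ ≤ (r : WithTop ℕ∞) := by exact_mod_cast (by omega : 1 + k ≤ r)

lemma my_hasCompactSupport_iteratedDeriv {g : ℝ → ℝ} (hsupp : HasCompactSupport g) (k : ℕ) :
    HasCompactSupport (iteratedDeriv k g) := by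
  rw [iteratedDeriv_eq_equiv_comp]
  exact (hsupp.iteratedFDeriv k).comp_left (by simp)
lemma my_integrable_bdd_comp {Ω : Type*} [MeasureSpace Ω] (P : Measure Ω)
    [IsProbabilityMeasure P] {U : Ω → ℝ} (hU : Measurable U) {h : ℝ → ℝ} (hc : Continuous h)
    {M : ℝ} (hM : ∀ x, |h x| ≤ M) : Integrable (fun ω => h (U ω)) P := by
  apply Integrable.mono' (integrable_const M)
    ((hc.measurable.comp hU).aestronglyMeasurable)
  exact ae_of_all _ fun ω => hM (U ω)

lemma my_stein_compact {Ω : Type*} [MeasureSpace Ω] (P : Measure Ω) [IsProbabilityMeasure P]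
    {r : ℕ} (hr : 0 < r) (m : Fin r → ℕ) (hm : ∀ i, 0 < m i)
    (Q : Fin r → Ω → ℝ) (hQ : ∀ i, Measurable (Q i))
    (hindep : iIndepFun Q P)
    (hQd : ∀ i, P.map (Q i) = gammaMeasure ((m i : ℝ) / 2) (1 / 2))
    (lam : Fin r → ℝ) (hnz : ∀ i, lam i ≠ 0)
    (μ : ℝ) (hμ : μ = ∑ i, lam i * (m i : ℝ))
    (Λ : ℕ → ℝ) (hΛ : ∀ k, Λ k = ∑ S ∈ univ.powersetCard k, ∏ j ∈ S, lam j)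
    (μk : ℕ → ℝ) (hμ0 : μk 0 = 0)
    (hμk : ∀ k, 1 ≤ k → μk k =
      ∑ i, lam i ^ 2 * (∑ S ∈ ((univ : Finset (Fin r)).erase i).powersetCard (k - 1),
        ∏ j ∈ S, lam j) * (m i : ℝ))
    (g : ℝ → ℝ) (hg : ContDiff ℝ r g) (hsupp : HasCompactSupport g) :
    ∑ k ∈ Finset.range (r + 1),
      (-2 : ℝ) ^ k * ∫ ω, (μk k + Λ k * (∑ i, lam i * Q i ω) - Λ k * μ)
        * iteratedDeriv k g (∑ i, lam i * Q i ω) ∂P = 0 := by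
  classical
  set U : Ω → ℝ := fun ω => ∑ i, lam i * Q i ω with hUdef
  have hUmeas : Measurable U := by
    apply Finset.measurable_sum
    intro j _
    exact (hQ j).const_mul (lam j)
  set E : Fin r → ℕ → ℝ :=
    fun i k => ∑ S ∈ ((univ : Finset (Fin r)).erase i).powersetCard k, ∏ j ∈ S, lam j with hE
  set Et : Fin r → ℕ → ℝ := fun i k => if k = 0 then 0 else E i (k - 1) with hEt
  set gd : ℕ → ℝ → ℝ := fun k => iteratedDeriv k g with hgd
  -- basic facts about gd
  have hgdcont : ∀ k ≤ r, Continuous (gd k) := by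
    intro k hk
    exact hg.continuous_iteratedDeriv k (by exact_mod_cast Nat.cast_le.mpr hk)
  have hgdsupp : ∀ k, HasCompactSupport (gd k) := fun k =>
    my_hasCompactSupport_iteratedDeriv hsupp k
  have hgdbdd : ∀ k ≤ r, ∃ M, ∀ x, |gd k x| ≤ M := by
    intro k hk
    obtain ⟨M, hM⟩ := (hgdsupp k).exists_bound_of_continuous (hgdcont k hk)
    exact ⟨M, fun x => hM x⟩
  have hQint : ∀ i, Integrable (Q i) P := by
    intro i
    have h1 : Integrable id (P.map (Q i)) := by
      rw [hQd i]
      exact my_integrable_id_gammaMeasure (by have := hm i; positivity) (by norm_num)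
    have := (integrable_map_measure aestronglyMeasurable_id (hQ i).aemeasurable).mp h1
    simpa [Function.comp] using this
  -- integrability of the building blocks
  have hint_gd : ∀ k ≤ r, Integrable (fun ω => gd k (U ω)) P := by
    intro k hk
    obtain ⟨M, hM⟩ := hgdbdd k hk
    exact my_integrable_bdd_comp P hUmeas (hgdcont k hk) hM
  have hint_Qgd : ∀ (i : Fin r), ∀ k ≤ r, Integrable (fun ω => Q i ω * gd k (U ω)) P := by
    intro i k hk
    obtain ⟨M, hM⟩ := hgdbdd k hk
    have := (hQint i).bdd_mul ((hgdcont k hk).measurable.comp hUmeas).aestronglyMeasurable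
      (ae_of_all _ fun ω => hM (U ω))
    exact this.congr (ae_of_all _ fun ω => mul_comm _ _)
  have hint_Qmgd : ∀ (i : Fin r), ∀ k ≤ r,
      Integrable (fun ω => (Q i ω - (m i : ℝ)) * gd k (U ω)) P := by
    intro i k hk
    have h2 : Integrable (fun ω => (m i : ℝ) * gd k (U ω)) P :=
      (hint_gd k hk).const_mul _
    exact ((hint_Qgd i k hk).sub h2).congr (ae_of_all _ fun ω => by simp only [Pi.sub_apply]; ring)
  set A : Fin r → ℕ → ℝ := fun i k => ∫ ω, (Q i ω - (m i : ℝ)) * gd k (U ω) ∂P with hA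
  set B : Fin r → ℕ → ℝ := fun i k => ∫ ω, Q i ω * gd k (U ω) ∂P with hB
  -- Stein step
  have hAB : ∀ (i : Fin r), ∀ k, k < r → A i k = 2 * lam i * B i (k + 1) := by
    intro i k hk
    have hstep := my_stein_step P m hm Q hQ hindep hQd lam hnz i (gd k)
      (my_contDiff_one_iteratedDeriv hg (by omega)) (hgdsupp k)
    have hder : deriv (gd k) = gd (k + 1) := (iteratedDeriv_succ).symm
    rw [hder] at hstep
    have hsplit : ∫ ω, (((m i : ℝ) - Q i ω) * gd k (U ω)
        + 2 * lam i * (Q i ω * gd (k + 1) (U ω))) ∂P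
        = (∫ ω, ((m i : ℝ) - Q i ω) * gd k (U ω) ∂P)
          + 2 * lam i * ∫ ω, Q i ω * gd (k + 1) (U ω) ∂P := by
      rw [integral_add]
      · rw [MeasureTheory.integral_const_mul]
      · exact ((hint_Qmgd i k (by omega)).neg).congr (ae_of_all _ fun ω => by simp only [Pi.neg_apply]; ring)
      · exact ((hint_Qgd i (k + 1) (by omega)).const_mul _)
    rw [hsplit] at hstep
    have hneg : ∫ ω, ((m i : ℝ) - Q i ω) * gd k (U ω) ∂P = - A i k := by
      rw [hA, ← integral_neg]
      congr 1
      funext ω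
      ring
    rw [hneg] at hstep
    rw [hB]
    linarith
  -- decomposition of the coefficient
  have hE0 : ∀ i, E i 0 = 1 := by
    intro i
    rw [hE]
    simp
  have hdecomp : ∀ k, ∀ ω, μk k + Λ k * U ω - Λ k * μ
      = ∑ i, ((lam i * E i k) * (Q i ω - (m i : ℝ)) + (lam i ^ 2 * Et i k) * Q i ω) := by
    intro k ω
    have hsub : U ω - μ = ∑ i, lam i * (Q i ω - (m i : ℝ)) := by
      rw [hUdef, hμ]
      rw [← Finset.sum_sub_distrib]
      apply Finset.sum_congr rfl
      intro i _
      ring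
    cases k with
    | zero =>
      have hΛ0 : Λ 0 = 1 := by rw [hΛ]; simp
      simp only [hμ0, hΛ0, hEt, if_pos rfl, hE0]
      calc (0 : ℝ) + 1 * U ω - 1 * μ = U ω - μ := by ring
        _ = ∑ i, lam i * (Q i ω - (m i : ℝ)) := hsub
        _ = ∑ i, (lam i * 1 * (Q i ω - (m i : ℝ)) + lam i ^ 2 * (if (0:ℕ) = 0 then (0:ℝ) else E i (0 - 1)) * Q i ω) := by
          apply Finset.sum_congr rfl
          intro i _
          simp
    | succ k' =>
      rw [hμk (k' + 1) (by omega), hΛ (k' + 1)]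
      have hΛrec : ∀ i : Fin r, (∑ S ∈ (univ : Finset (Fin r)).powersetCard (k' + 1), ∏ j ∈ S, lam j)
          = E i (k' + 1) + lam i * E i k' := by
        intro i
        rw [hE]
        exact my_esymm_rec lam i k'
      calc (∑ i, lam i ^ 2 * (∑ S ∈ ((univ : Finset (Fin r)).erase i).powersetCard (k' + 1 - 1), ∏ j ∈ S, lam j) * (m i : ℝ))
            + (∑ S ∈ (univ : Finset (Fin r)).powersetCard (k' + 1), ∏ j ∈ S, lam j) * U ω
            - (∑ S ∈ (univ : Finset (Fin r)).powersetCard (k' + 1), ∏ j ∈ S, lam j) * μ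
          = (∑ i, lam i ^ 2 * E i k' * (m i : ℝ))
            + (∑ S ∈ (univ : Finset (Fin r)).powersetCard (k' + 1), ∏ j ∈ S, lam j) * (U ω - μ) := by
            rw [hE]
            norm_num
            ring
        _ = ∑ i, (lam i ^ 2 * E i k' * (m i : ℝ)
            + (∑ S ∈ (univ : Finset (Fin r)).powersetCard (k' + 1), ∏ j ∈ S, lam j)
              * (lam i * (Q i ω - (m i : ℝ)))) := by
            rw [hsub, Finset.mul_sum, ← Finset.sum_add_distrib]
        _ = ∑ i, ((lam i * E i (k' + 1)) * (Q i ω - (m i : ℝ)) + (lam i ^ 2 * Et i (k' + 1)) * Q i ω) := by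
            apply Finset.sum_congr rfl
            intro i _
            rw [hΛrec i, hEt]
            simp only [Nat.succ_ne_zero, if_false, Nat.add_sub_cancel]
            ring
  -- rewrite each integral
  have hT : ∀ k ≤ r, ∫ ω, (μk k + Λ k * U ω - Λ k * μ) * gd k (U ω) ∂P
      = ∑ i, ((lam i * E i k) * A i k + (lam i ^ 2 * Et i k) * B i k) := by
    intro k hk
    have hptw : ∀ ω, (μk k + Λ k * U ω - Λ k * μ) * gd k (U ω)
        = ∑ i, ((lam i * E i k) * ((Q i ω - (m i : ℝ)) * gd k (U ω))
          + (lam i ^ 2 * Et i k) * (Q i ω * gd k (U ω))) := by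
      intro ω
      rw [hdecomp k ω, Finset.sum_mul]
      apply Finset.sum_congr rfl
      intro i _
      ring
    simp_rw [hptw]
    rw [integral_finset_sum]
    · apply Finset.sum_congr rfl
      intro i _
      rw [integral_add (((hint_Qmgd i k hk).const_mul _)) (((hint_Qgd i k hk).const_mul _)),
        MeasureTheory.integral_const_mul, MeasureTheory.integral_const_mul]
    · intro i _
      exact ((hint_Qmgd i k hk).const_mul _).add ((hint_Qgd i k hk).const_mul _)
  -- assemble
  calc ∑ k ∈ Finset.range (r + 1), (-2 : ℝ) ^ k
        * ∫ ω, (μk k + Λ k * U ω - Λ k * μ) * iteratedDeriv k g (U ω) ∂P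
      = ∑ k ∈ Finset.range (r + 1), ∑ i,
          ((-2 : ℝ) ^ k * ((lam i * E i k) * A i k) + (-2 : ℝ) ^ k * ((lam i ^ 2 * Et i k) * B i k)) := by
        apply Finset.sum_congr rfl
        intro k hk
        have hk' : k ≤ r := by
          have := Finset.mem_range.mp hk
          omega
        rw [hT k hk', Finset.mul_sum]
        apply Finset.sum_congr rfl
        intro i _
        ring
    _ = ∑ i : Fin r, ∑ k ∈ Finset.range (r + 1),
          ((-2 : ℝ) ^ k * ((lam i * E i k) * A i k) + (-2 : ℝ) ^ k * ((lam i ^ 2 * Et i k) * B i k)) :=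
        Finset.sum_comm
    _ = ∑ i : Fin r, (0 : ℝ) := by
        apply Finset.sum_congr rfl
        intro i _
        rw [Finset.sum_add_distrib]
        have h1 : ∑ k ∈ Finset.range (r + 1), (-2 : ℝ) ^ k * ((lam i * E i k) * A i k)
            = ∑ k ∈ Finset.range r, (-2 : ℝ) ^ k * ((lam i * E i k) * A i k) := by
          rw [Finset.sum_range_succ]
          have : E i r = 0 := by rw [hE]; exact my_esymm_top lam i
          rw [this]
          simp
        have h2 : ∑ k ∈ Finset.range (r + 1), (-2 : ℝ) ^ k * ((lam i ^ 2 * Et i k) * B i k)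
            = ∑ k ∈ Finset.range r, (-2 : ℝ) ^ (k + 1) * ((lam i ^ 2 * E i k) * B i (k + 1)) := by
          rw [Finset.sum_range_succ']
          have hEt0 : Et i 0 = 0 := by rw [hEt]; simp
          rw [hEt0]
          have : ∀ k, Et i (k + 1) = E i k := by intro k; rw [hEt]; simp
          simp_rw [this]
          simp
        rw [h1, h2, ← Finset.sum_add_distrib]
        apply Finset.sum_eq_zero
        intro k hk
        rw [hAB i k (Finset.mem_range.mp hk)]
        ring
    _ = 0 := by simp
theorem stein_equation_weighted_chisq_noncentered
    {Ω : Type*} [MeasureSpace Ω] (P : Measure Ω) [IsProbabilityMeasure P]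
    (r : ℕ) (hr : 0 < r)
    (m : Fin r → ℕ) (hm : ∀ i, 0 < m i)
    (Q : Fin r → Ω → ℝ) (hQ : ∀ i, Measurable (Q i))
    (hindep : iIndepFun Q P)
    (hQd : ∀ i, P.map (Q i) = gammaMeasure ((m i : ℝ) / 2) (1 / 2))
    (lam : Fin r → ℝ) (hdist : Function.Injective lam) (hnz : ∀ i, lam i ≠ 0)
    (U : Ω → ℝ) (hU : U = fun ω => ∑ i, lam i * Q i ω)
    (μ : ℝ) (hμ : μ = ∑ i, lam i * (m i : ℝ))
    (Λ : ℕ → ℝ) (hΛ : ∀ k, Λ k = ∑ S ∈ univ.powersetCard k, ∏ j ∈ S, lam j)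
    (μk : ℕ → ℝ) (hμ0 : μk 0 = 0)
    (hμk : ∀ k, 1 ≤ k → μk k =
      ∑ i, lam i ^ 2 * (∑ S ∈ ((univ : Finset (Fin r)).erase i).powersetCard (k - 1),
        ∏ j ∈ S, lam j) * (m i : ℝ))
    (f : ℝ → ℝ) (hf : ContDiff ℝ r f)
    (hint1 : ∀ k ≤ r, Integrable (fun ω => iteratedDeriv k f (U ω)) P)
    (hint2 : ∀ k ≤ r, Integrable (fun ω => U ω * iteratedDeriv k f (U ω)) P) :
    ∑ k ∈ Finset.range (r + 1),
      (-2 : ℝ) ^ k * ∫ ω, (μk k + Λ k * U ω - Λ k * μ) * iteratedDeriv k f (U ω) ∂P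
      = 0 := by
  classical
  subst hU
  set U : Ω → ℝ := fun ω => ∑ i, lam i * Q i ω with hUdef
  have hUmeas : Measurable U := by
    apply Finset.measurable_sum
    intro j _
    exact (hQ j).const_mul (lam j)
  -- the bump function
  set χ : ContDiffBump (0 : ℝ) :=
    { rIn := 1, rOut := 2, rIn_pos := one_pos, rIn_lt_rOut := one_lt_two } with hχ
  -- bounds on the derivatives of the bump function
  have hDex : ∀ l : ℕ, ∃ D : ℝ, ∀ x, |iteratedDeriv l (⇑χ) x| ≤ D := by
    intro l
    obtain ⟨D, hD⟩ := (my_hasCompactSupport_iteratedDeriv χ.hasCompactSupport l)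
      |>.exists_bound_of_continuous ((χ.contDiff (n := l)).continuous_iteratedDeriv l le_rfl)
    exact ⟨D, fun x => hD x⟩
  choose D hD using hDex
  -- the cutoff functions
  set c : ℕ → ℝ → ℝ := fun n x => χ ((1 / ((n : ℝ) + 1)) * x) with hc
  have hcpos : ∀ n : ℕ, (0 : ℝ) < 1 / ((n : ℝ) + 1) := by
    intro n; positivity
  have hcCD : ∀ (n : ℕ) (N : ℕ), ContDiff ℝ N (c n) := by
    intro n N
    exact χ.contDiff.comp (contDiff_const.mul contDiff_id)
  have hcsupp : ∀ n : ℕ, HasCompactSupport (c n) := by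
    intro n
    have : c n = ⇑χ ∘ (Homeomorph.mulLeft₀ (1 / ((n : ℝ) + 1)) (hcpos n).ne') := by
      funext x; simp [hc, Function.comp, Homeomorph.mulLeft₀]
    rw [this]
    exact χ.hasCompactSupport.comp_homeomorph _
  -- derivative bounds for the cutoffs, uniform in n
  have hcD : ∀ (n : ℕ) (l : ℕ) (x : ℝ), ‖iteratedFDeriv ℝ l (c n) x‖ ≤ D l := by
    intro n l x
    rw [norm_iteratedFDeriv_eq_norm_iteratedDeriv]
    have heq := iteratedDeriv_comp_const_mul (f := ⇑χ) (n := l) (χ.contDiff (n := l))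
      (1 / ((n : ℝ) + 1))
    have : iteratedDeriv l (c n) x
        = (1 / ((n : ℝ) + 1)) ^ l * iteratedDeriv l (⇑χ) ((1 / ((n : ℝ) + 1)) * x) := by
      rw [hc]
      exact congrFun heq x
    rw [Real.norm_eq_abs, this, abs_mul]
    have h1 : |(1 / ((n : ℝ) + 1)) ^ l| ≤ 1 := by
      rw [abs_pow]
      apply pow_le_one₀ (abs_nonneg _)
      rw [abs_of_pos (hcpos n)]
      rw [div_le_one (by positivity)]
      linarith [Nat.cast_nonneg (α := ℝ) n]
    have h2 := hD l ((1 / ((n : ℝ) + 1)) * x)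
    have h2' : (0:ℝ) ≤ D l := le_trans (abs_nonneg _) h2
    calc |(1 / ((n : ℝ) + 1)) ^ l| * |iteratedDeriv l (⇑χ) ((1 / ((n : ℝ) + 1)) * x)|
        ≤ 1 * D l := mul_le_mul h1 h2 (abs_nonneg _) one_pos.le
      _ = D l := one_mul _
  -- the approximating functions
  set gc : ℕ → ℝ → ℝ := fun n x => c n x * f x with hgc
  have hgcCD : ∀ n, ContDiff ℝ r (gc n) := fun n => (hcCD n r).mul hf
  have hgcsupp : ∀ n, HasCompactSupport (gc n) := by
    intro n
    exact (hcsupp n).mul_right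
  -- uniform bound on iterated derivatives of gc
  have hgcbdd : ∀ (n : ℕ) (k : ℕ), k ≤ r → ∀ x,
      |iteratedDeriv k (gc n) x| ≤ ∑ j ∈ Finset.range (k + 1),
        (k.choose j : ℝ) * D j * |iteratedDeriv (k - j) f x| := by
    intro n k hk x
    rw [← Real.norm_eq_abs, ← norm_iteratedFDeriv_eq_norm_iteratedDeriv]
    have hb := norm_iteratedFDeriv_mul_le (𝕜 := ℝ) (f := c n) (g := f) (N := (r : WithTop ℕ∞))
      (hcCD n r) hf x (by exact_mod_cast Nat.cast_le.mpr hk)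
    refine hb.trans ?_
    apply Finset.sum_le_sum
    intro j hj
    have h1 := hcD n j x
    have h2 : ‖iteratedFDeriv ℝ (k - j) f x‖ = |iteratedDeriv (k - j) f x| := by
      rw [norm_iteratedFDeriv_eq_norm_iteratedDeriv, Real.norm_eq_abs]
    rw [← h2]
    have h3 : (0:ℝ) ≤ (k.choose j : ℝ) := by positivity
    calc (k.choose j : ℝ) * ‖iteratedFDeriv ℝ j (c n) x‖ * ‖iteratedFDeriv ℝ (k - j) f x‖
        ≤ (k.choose j : ℝ) * D j * ‖iteratedFDeriv ℝ (k - j) f x‖ := by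
          apply mul_le_mul_of_nonneg_right _ (norm_nonneg _)
          exact mul_le_mul_of_nonneg_left h1 h3
      _ = (k.choose j : ℝ) * D j * ‖iteratedFDeriv ℝ (k - j) f x‖ := rfl
  -- pointwise convergence of iterated derivatives
  have hgcconv : ∀ (k : ℕ) (x : ℝ),
      Filter.Tendsto (fun n => iteratedDeriv k (gc n) x) Filter.atTop
        (nhds (iteratedDeriv k f x)) := by
    intro k x
    apply tendsto_atTop_of_eventually_const (i₀ := ⌈|x|⌉₊)
    intro n hn
    have hxn : |x| < (n : ℝ) + 1 := by
      calc |x| ≤ (⌈|x|⌉₊ : ℝ) := Nat.le_ceil _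
        _ ≤ (n : ℝ) := by exact_mod_cast hn
        _ < (n : ℝ) + 1 := by linarith
    have hopen : IsOpen {y : ℝ | |y| < (n : ℝ) + 1} := isOpen_lt continuous_abs continuous_const
    have hmem : x ∈ {y : ℝ | |y| < (n : ℝ) + 1} := hxn
    apply Filter.EventuallyEq.iteratedDeriv_eq
    apply Filter.eventuallyEq_of_mem (hopen.mem_nhds hmem)
    intro y hy
    have hy' : |y| < (n : ℝ) + 1 := hy
    have hone : c n y = 1 := by
      apply χ.one_of_mem_closedBall
      simp only [Metric.mem_closedBall, Real.dist_eq, sub_zero]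
      have : |(1 / ((n : ℝ) + 1)) * y| = |y| / ((n : ℝ) + 1) := by
        rw [abs_mul, abs_of_pos (hcpos n)]
        ring
      rw [this]
      rw [div_le_iff₀ (by positivity)]
      linarith
    simp [hgc, hone]
  -- dominated convergence for each k
  have hDCT : ∀ k ≤ r, Filter.Tendsto
      (fun n => ∫ ω, (μk k + Λ k * U ω - Λ k * μ) * iteratedDeriv k (gc n) (U ω) ∂P)
      Filter.atTop
      (nhds (∫ ω, (μk k + Λ k * U ω - Λ k * μ) * iteratedDeriv k f (U ω) ∂P)) := by
    intro k hk
    set bound : Ω → ℝ := fun ω => ∑ j ∈ Finset.range (k + 1),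
      ((k.choose j : ℝ) * D j) * ((|μk k| + |Λ k * μ|) * |iteratedDeriv (k - j) f (U ω)|
        + |Λ k| * |U ω * iteratedDeriv (k - j) f (U ω)|) with hbound
    have hDnn : ∀ j, (0:ℝ) ≤ D j := fun j => le_trans (abs_nonneg _) (hD j 0)
    apply MeasureTheory.tendsto_integral_of_dominated_convergence bound
    · intro n
      apply AEStronglyMeasurable.mul
      · apply Measurable.aestronglyMeasurable
        exact (measurable_const.add ((hUmeas.const_mul (Λ k)))).sub measurable_const
      · exact (((hgcCD n).continuous_iteratedDeriv k
          (by exact_mod_cast Nat.cast_le.mpr hk)).measurable.comp hUmeas).aestronglyMeasurable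
    · apply integrable_finset_sum
      intro j hj
      have hkj : k - j ≤ r := by omega
      apply Integrable.const_mul
      exact ((((hint1 (k - j) hkj).abs.const_mul _)).add (((hint2 (k - j) hkj).abs.const_mul _)))
    · intro n
      apply ae_of_all
      intro ω
      rw [Real.norm_eq_abs, abs_mul]
      have h1 : |iteratedDeriv k (gc n) (U ω)| ≤ ∑ j ∈ Finset.range (k + 1),
          (k.choose j : ℝ) * D j * |iteratedDeriv (k - j) f (U ω)| := hgcbdd n k hk (U ω)
      have hW : |μk k + Λ k * U ω - Λ k * μ| ≤ (|μk k| + |Λ k * μ|) + |Λ k| * |U ω| := by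
        calc |μk k + Λ k * U ω - Λ k * μ| ≤ |μk k + Λ k * U ω| + |Λ k * μ| := abs_sub _ _
          _ ≤ |μk k| + |Λ k * U ω| + |Λ k * μ| := by
              exact add_le_add (abs_add_le _ _) le_rfl
          _ = (|μk k| + |Λ k * μ|) + |Λ k| * |U ω| := by rw [abs_mul]; ring
      calc |μk k + Λ k * U ω - Λ k * μ| * |iteratedDeriv k (gc n) (U ω)|
          ≤ ((|μk k| + |Λ k * μ|) + |Λ k| * |U ω|) * (∑ j ∈ Finset.range (k + 1),
            (k.choose j : ℝ) * D j * |iteratedDeriv (k - j) f (U ω)|) := by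
            apply mul_le_mul hW h1 (abs_nonneg _)
            positivity
        _ = bound ω := by
            rw [hbound, Finset.mul_sum]
            apply Finset.sum_congr rfl
            intro j hj
            rw [abs_mul (U ω) (iteratedDeriv (k - j) f (U ω))]
            ring
    · apply ae_of_all
      intro ω
      exact (hgcconv k (U ω)).const_mul _
  -- the identity for each cutoff
  have hzero : ∀ n, ∑ k ∈ Finset.range (r + 1),
      (-2 : ℝ) ^ k * ∫ ω, (μk k + Λ k * U ω - Λ k * μ) * iteratedDeriv k (gc n) (U ω) ∂P = 0 := by
    intro n
    exact my_stein_compact P hr m hm Q hQ hindep hQd lam hnz μ hμ Λ hΛ μk hμ0 hμk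
      (gc n) (hgcCD n) (hgcsupp n)
  -- pass to the limit
  have hlim : Filter.Tendsto (fun n => ∑ k ∈ Finset.range (r + 1),
      (-2 : ℝ) ^ k * ∫ ω, (μk k + Λ k * U ω - Λ k * μ) * iteratedDeriv k (gc n) (U ω) ∂P)
      Filter.atTop
      (nhds (∑ k ∈ Finset.range (r + 1),
        (-2 : ℝ) ^ k * ∫ ω, (μk k + Λ k * U ω - Λ k * μ) * iteratedDeriv k f (U ω) ∂P)) := by
    apply tendsto_finset_sum
    intro k hk
    exact (hDCT k (by have := Finset.mem_range.mp hk; omega)).const_mul _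
  exact tendsto_nhds_unique hlim
    (Filter.Tendsto.congr (fun n => (hzero n).symm) tendsto_const_nhds)
end
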